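/- arXiv:1709.05800 — 2 statements merged into one kernel-verified Lean document; each statement's English description precedes it below -/
import Mathlib

section
/- Let Γ be a finite simple graph with Godsil–McKay partition π = {C₁, …, C_t, D} and switching matrix Q, let Δ be a finite simple graph, and let ⋆ be the unified product of any fixed type. Let Π = {C_i × {w} : i ∈ [t], w ∈ V(Δ)} ∪ {D × V(Δ)} be the induced Godsil–McKay partition of Γ ⋆ Δ. Then the switching matrix of Π equals Q ⊗ I, and (Q ⊗ I) A(Γ ⋆ Δ) (Q ⊗ I) = A((sw_π Γ) ⋆ Δ); in particular, the graph (sw_π Γ) ⋆ Δ is isomorphic to sw_Π (Γ ⋆ Δ). -/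
open Classical Matrix Kronecker

/-- The number of neighbors of `x` inside the set `c`. -/
noncomputable def nbrCount {V : Type*} (G : SimpleGraph V) (x : V) (c : Finset V) : ℕ :=
  (c.filter fun y => G.Adj x y).card

/-- `{C i} ∪ {D}` is a partition of the vertex set (all cells nonempty, pairwise
disjoint, covering). -/
def IsPartitionWithCell {V ι : Type*} (C : ι → Finset V) (D : Finset V) : Prop :=
  (∀ i, (C i).Nonempty) ∧ D.Nonempty ∧
    Pairwise (fun i j => Disjoint (C i) (C j)) ∧
    (∀ i, Disjoint (C i) D) ∧ ∀ x : V, x ∈ D ∨ ∃ i, x ∈ C i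

/-- The family of cells `C` is equitable for `G` : any two vertices of a cell `C i`
have the same number of neighbors in each cell `C j`. -/
def IsEquitableOn {V ι : Type*} (G : SimpleGraph V) (C : ι → Finset V) : Prop :=
  ∀ i j, ∀ x ∈ C i, ∀ y ∈ C i, nbrCount G x (C j) = nbrCount G y (C j)

/-- Every vertex of `D` has `0`, `|C i|/2` or `|C i|` neighbors in each cell `C i`. -/
def GMhalf {V ι : Type*} (G : SimpleGraph V) (C : ι → Finset V) (D : Finset V) : Prop :=
  ∀ x ∈ D, ∀ i, nbrCount G x (C i) = 0 ∨ 2 * nbrCount G x (C i) = (C i).card ∨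
    nbrCount G x (C i) = (C i).card

/-- `π = {C₁, …, C_t, D}` is a Godsil–McKay partition of `G` with Godsil–McKay cell `D`. -/
def IsGMPartition {V ι : Type*} (G : SimpleGraph V) (C : ι → Finset V) (D : Finset V) : Prop :=
  IsPartitionWithCell C D ∧ IsEquitableOn G C ∧ GMhalf G C D

/-- The graph obtained from `G` by Godsil–McKay switching with respect to the
partition `{C₁, …, C_t, D}` : adjacency and nonadjacency between `x ∈ D` and the
vertices of `C i` are interchanged whenever `x` has exactly `|C i|/2` neighbors in `C i`. -/
def GMswitch {V ι : Type*} (G : SimpleGraph V) (C : ι → Finset V) (D : Finset V) :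
    SimpleGraph V where
  Adj x y := x ≠ y ∧ Xor' (G.Adj x y)
    (∃ i, (x ∈ D ∧ y ∈ C i ∧ 2 * nbrCount G x (C i) = (C i).card) ∨
          (y ∈ D ∧ x ∈ C i ∧ 2 * nbrCount G y (C i) = (C i).card))
  symm := by
    constructor
    rintro x y ⟨hne, h⟩
    refine ⟨hne.symm, ?_⟩
    have h1 : (G.Adj y x) = (G.Adj x y) := propext (G.adj_comm y x)
    have h2 : (∃ i, (y ∈ D ∧ x ∈ C i ∧ 2 * nbrCount G y (C i) = (C i).card) ∨
          (x ∈ D ∧ y ∈ C i ∧ 2 * nbrCount G x (C i) = (C i).card)) =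
        (∃ i, (x ∈ D ∧ y ∈ C i ∧ 2 * nbrCount G x (C i) = (C i).card) ∨
          (y ∈ D ∧ x ∈ C i ∧ 2 * nbrCount G y (C i) = (C i).card)) :=
      propext (exists_congr fun i => or_comm)
    rw [h1, h2]
    exact h
  loopless := by constructor; rintro x ⟨hne, -⟩; exact hne rfl

/-- The adjacency matrix of a graph, with rational entries. -/
noncomputable def adjM {V : Type*} (G : SimpleGraph V) : Matrix V V ℚ :=
  Matrix.of fun x y => if G.Adj x y then 1 else 0

/-- The all-one matrix. -/
def allOnes (V : Type*) : Matrix V V ℚ := Matrix.of fun _ _ => 1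

/-- The switching matrix `Q` of the partition `{C₁, …, C_t, D}` :
`Q x y = 2/|C i| - δ_{x y}` if `x, y ∈ C i`, `Q x y = δ_{x y}` if `x, y ∈ D`,
and `Q x y = 0` otherwise. -/
noncomputable def switchMatrix {V ι : Type*} (C : ι → Finset V) (D : Finset V) :
    Matrix V V ℚ :=
  Matrix.of fun x y =>
    if h : ∃ i, x ∈ C i ∧ y ∈ C i then
      2 / ((C h.choose).card : ℚ) - (if x = y then 1 else 0)
    else if x ∈ D ∧ y ∈ D then (if x = y then 1 else 0) else 0

/-- The characteristic matrix of a family of cells: `S x i = 1` iff `x ∈ C i`. -/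
noncomputable def charMat {V ι : Type*} (C : ι → Finset V) : Matrix V ι ℚ :=
  Matrix.of fun x i => if x ∈ C i then 1 else 0

/-- `A₀ = I`, `A₁ = A(G)`, `A₂ = J - I - A(G)`. -/
noncomputable def stdMats {V : Type*} [DecidableEq V] (G : SimpleGraph V) :
    Fin 3 → Matrix V V ℚ :=
  ![1, adjM G, allOnes V - 1 - adjM G]

/-- The three basic relations: `i = 0` : equality, `i = 1` : adjacency,
`i = 2` : distinct nonadjacency. -/
def relOfIdx {V : Type*} (G : SimpleGraph V) (i : Fin 3) (x y : V) : Prop :=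
  (i = 0 ∧ x = y) ∨ (i = 1 ∧ G.Adj x y) ∨ (i = 2 ∧ x ≠ y ∧ ¬ G.Adj x y)

lemma relOfIdx_symm {V : Type*} {G : SimpleGraph V} {i : Fin 3} {x y : V}
    (h : relOfIdx G i x y) : relOfIdx G i y x := by
  rcases h with ⟨hi, h⟩ | ⟨hi, h⟩ | ⟨hi, h1, h2⟩
  · exact Or.inl ⟨hi, h.symm⟩
  · exact Or.inr (Or.inl ⟨hi, h.symm⟩)
  · exact Or.inr (Or.inr ⟨hi, h1.symm, fun hadj => h2 hadj.symm⟩)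

/-- The unified graph product of type `[0 s₀₁ s₀₂; s₁₀ s₁₁ s₁₂; s₂₀ s₂₁ s₂₂]` :
the graph on `V × W` whose adjacency matrix is `Σ_{i,j} s i j • (A_i ⊗ B_j)`. -/
def unifiedProd {V W : Type*} (G : SimpleGraph V) (H : SimpleGraph W)
    (s : Fin 3 → Fin 3 → ℚ) : SimpleGraph (V × W) where
  Adj p q := p ≠ q ∧ ∃ i j, s i j = 1 ∧ relOfIdx G i p.1 q.1 ∧ relOfIdx H j p.2 q.2
  symm := by
    constructor
    rintro p q ⟨hne, i, j, hs, hi, hj⟩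
    exact ⟨hne.symm, i, j, hs, relOfIdx_symm hi, relOfIdx_symm hj⟩
  loopless := by constructor; rintro p ⟨hne, -⟩; exact hne rfl

/-!
Write `A(Γ ⋆ Δ) = ∑ cᵢⱼ • Aᵢ ⊗ Bⱼ`. For a Godsil–McKay partition, `Q² = I`, `QJ = JQ = J` and
`QAQ = A(sw_π Γ)` (the Godsil–McKay lemma: equitability and the `0, |Cᵢ|/2, |Cᵢ|` condition
make each entry of `QAQ` collapse to the switched adjacency), so conjugation by `Q ⊗ I` replaces
every `Aᵢ` by the corresponding matrix of `sw_π Γ` and gives `A((sw_π Γ) ⋆ Δ)`.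

The partition `Π` is again a Godsil–McKay partition of `Γ ⋆ Δ`: with `j = rel(u, w)`, the vertex
`(x, u)` has `∑ₖ cₖⱼ · #{y ∈ Cᵢ | rel(x, y) = k}` neighbours in `Cᵢ × {w}`; these counts are
constant on the cells of `Π`, and for `x ∈ D` they are among `0, n, |Cᵢ| - n, |Cᵢ|` where
`n ∈ {0, |Cᵢ|/2, |Cᵢ|}`. Its switching matrix is `Q ⊗ I`, so the Godsil–McKay lemma for `Π` gives
`A(sw_Π (Γ ⋆ Δ)) = (Q ⊗ I) A(Γ ⋆ Δ) (Q ⊗ I) = A((sw_π Γ) ⋆ Δ)`: the two graphs are equal.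
-/

open Finset

noncomputable def relIdx {V : Type*} (G : SimpleGraph V) (x y : V) : Fin 3 :=
  if x = y then 0 else if G.Adj x y then 1 else 2

section Relations
variable {V : Type*} {G : SimpleGraph V} {x y : V}

lemma relOfIdx_iff_relIdx_eq {i : Fin 3} : relOfIdx G i x y ↔ relIdx G x y = i := by
  unfold relOfIdx relIdx
  by_cases h : x = y
  · subst h; simp [eq_comm]
  · by_cases ha : G.Adj x y <;> simp [h, ha, eq_comm]

lemma relIdx_eq_zero_iff : relIdx G x y = 0 ↔ x = y := by
  unfold relIdx; split_ifs <;> simp_all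

lemma relIdx_eq_one_iff : relIdx G x y = 1 ↔ G.Adj x y := by
  unfold relIdx; split_ifs <;> simp_all

end Relations

section SwitchMatrix
variable {V ι : Type*} [DecidableEq V] {C : ι → Finset V} {D : Finset V} {x y : V} {i : ι}

lemma switchMatrix_apply_of_mem_cell (hdis : Pairwise fun i j => Disjoint (C i) (C j))
    (hx : x ∈ C i) (hy : y ∈ C i) :
    switchMatrix C D x y = 2 / (#(C i) : ℚ) - (1 : Matrix V V ℚ) x y := by
  have h : ∃ j, x ∈ C j ∧ y ∈ C j := ⟨i, hx, hy⟩
  simp only [switchMatrix, of_apply, dif_pos h,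
    hdis.eq (not_disjoint_iff.2 ⟨x, h.choose_spec.1, hx⟩), one_apply]
  -- `switchMatrix` decides `x = y` classically, `one_apply` through `DecidableEq V`
  congr

lemma switchMatrix_apply_of_not_mem_cell (h : ¬ ∃ i, x ∈ C i ∧ y ∈ C i) :
    switchMatrix C D x y = if x ∈ D ∧ y ∈ D then (1 : Matrix V V ℚ) x y else 0 := by
  simp only [switchMatrix, of_apply, dif_neg h, one_apply]
  congr

lemma switchMatrix_apply_of_mem_D (hP : IsPartitionWithCell C D) (hx : x ∈ D) :
    switchMatrix C D x y = (1 : Matrix V V ℚ) x y := by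
  have hxC : ∀ i, x ∉ C i := fun i hi => disjoint_left.mp (hP.2.2.2.1 i) hi hx
  rw [switchMatrix_apply_of_not_mem_cell fun ⟨i, hi, _⟩ => hxC i hi]
  by_cases hy : y ∈ D
  · rw [if_pos ⟨hx, hy⟩]
  · rw [if_neg fun h => hy h.2, one_apply_ne fun h : x = y => hy (h ▸ hx)]

lemma switchMatrix_apply_of_mem_cell_of_not_mem (hP : IsPartitionWithCell C D)
    (hx : x ∈ C i) (hy : y ∉ C i) : switchMatrix C D x y = 0 := by
  have hxD : x ∉ D := disjoint_left.mp (hP.2.2.2.1 i) hx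
  rw [switchMatrix_apply_of_not_mem_cell, if_neg fun h => hxD h.1]
  rintro ⟨j, hxj, hyj⟩
  exact hy (hP.2.2.1.eq (not_disjoint_iff.2 ⟨x, hxj, hx⟩) ▸ hyj)

lemma switchMatrix_transpose (hP : IsPartitionWithCell C D) :
    (switchMatrix C D)ᵀ = switchMatrix C D := by
  ext x y
  have h1 : (1 : Matrix V V ℚ) y x = (1 : Matrix V V ℚ) x y := by
    simp only [one_apply, eq_comm]
  rw [transpose_apply]
  by_cases h : ∃ i, x ∈ C i ∧ y ∈ C i
  · obtain ⟨i, hx, hy⟩ := h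
    rw [switchMatrix_apply_of_mem_cell hP.2.2.1 hy hx,
      switchMatrix_apply_of_mem_cell hP.2.2.1 hx hy, h1]
  · rw [switchMatrix_apply_of_not_mem_cell h,
      switchMatrix_apply_of_not_mem_cell fun ⟨i, hy, hx⟩ => h ⟨i, hx, hy⟩, h1]
    simp only [and_comm]

variable [Fintype V]

lemma switchMatrix_mul_apply_of_mem_D (hP : IsPartitionWithCell C D) (hx : x ∈ D)
    (M : Matrix V V ℚ) : (switchMatrix C D * M) x y = M x y := by
  simp only [mul_apply, switchMatrix_apply_of_mem_D hP hx, one_apply, ite_mul, one_mul,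
    zero_mul, sum_ite_eq, mem_univ, if_true]

lemma switchMatrix_mul_apply_of_mem_cell (hP : IsPartitionWithCell C D) (hx : x ∈ C i)
    (M : Matrix V V ℚ) :
    (switchMatrix C D * M) x y = 2 / (#(C i) : ℚ) * ∑ z ∈ C i, M z y - M x y := by
  rw [mul_apply, ← sum_subset (subset_univ (C i)) fun z _ hz => by
    rw [switchMatrix_apply_of_mem_cell_of_not_mem hP hx hz, zero_mul]]
  rw [sum_congr rfl fun z hz => by rw [switchMatrix_apply_of_mem_cell hP.2.2.1 hx hz],
    mul_sum]
  simp only [sub_mul, one_apply, ite_mul, one_mul, zero_mul, sum_sub_distrib, sum_ite_eq,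
    if_pos hx]

lemma mul_switchMatrix_apply_of_mem_D (hP : IsPartitionWithCell C D) (hy : y ∈ D)
    (M : Matrix V V ℚ) : (M * switchMatrix C D) x y = M x y := by
  rw [← transpose_apply (M * _), transpose_mul, switchMatrix_transpose hP,
    switchMatrix_mul_apply_of_mem_D hP hy, transpose_apply]

lemma mul_switchMatrix_apply_of_mem_cell (hP : IsPartitionWithCell C D) (hy : y ∈ C i)
    (M : Matrix V V ℚ) :
    (M * switchMatrix C D) x y = 2 / (#(C i) : ℚ) * ∑ z ∈ C i, M x z - M x y := by
  rw [← transpose_apply (M * _), transpose_mul, switchMatrix_transpose hP,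
    switchMatrix_mul_apply_of_mem_cell hP hy]
  simp only [transpose_apply]

lemma switchMatrix_mul_self (hP : IsPartitionWithCell C D) :
    switchMatrix C D * switchMatrix C D = 1 := by
  ext x y
  rcases hP.2.2.2.2 x with hx | ⟨i, hx⟩
  · rw [switchMatrix_mul_apply_of_mem_D hP hx, switchMatrix_apply_of_mem_D hP hx]
  have hcard : (#(C i) : ℚ) ≠ 0 := Nat.cast_ne_zero.mpr (card_ne_zero_of_mem hx)
  rw [switchMatrix_mul_apply_of_mem_cell hP hx, one_apply]
  by_cases hy : y ∈ C i
  · rw [sum_congr rfl fun z hz => switchMatrix_apply_of_mem_cell hP.2.2.1 hz hy,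
      switchMatrix_apply_of_mem_cell hP.2.2.1 hx hy, sum_sub_distrib, sum_const,
      sum_congr rfl fun z _ => one_apply (i := z) (j := y), sum_ite_eq' (C i) y, if_pos hy,
      nsmul_eq_mul, one_apply]
    field_simp
    ring
  · rw [sum_eq_zero fun z hz => switchMatrix_apply_of_mem_cell_of_not_mem hP hz hy,
      switchMatrix_apply_of_mem_cell_of_not_mem hP hx hy, if_neg fun h : x = y => hy (h ▸ hx)]
    ring

lemma switchMatrix_mul_allOnes (hP : IsPartitionWithCell C D) :
    switchMatrix C D * allOnes V = allOnes V := by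
  ext x y
  rcases hP.2.2.2.2 x with hx | ⟨i, hx⟩
  · exact switchMatrix_mul_apply_of_mem_D hP hx _
  have hcard : (#(C i) : ℚ) ≠ 0 := Nat.cast_ne_zero.mpr (card_ne_zero_of_mem hx)
  simp only [switchMatrix_mul_apply_of_mem_cell hP hx, allOnes, of_apply, sum_const,
    nsmul_eq_mul, mul_one]
  field_simp
  ring

lemma allOnes_mul_switchMatrix (hP : IsPartitionWithCell C D) :
    allOnes V * switchMatrix C D = allOnes V := by
  have hJ : (allOnes V)ᵀ = allOnes V := rfl
  rw [← hJ, ← switchMatrix_transpose hP, ← transpose_mul, switchMatrix_mul_allOnes hP]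

end SwitchMatrix

section Switching
variable {V ι : Type*} {G : SimpleGraph V} {C : ι → Finset V} {D : Finset V} {x y : V}
  {i j : ι}

lemma adjM_transpose : (adjM G)ᵀ = adjM G := by
  ext x y
  simp only [transpose_apply, adjM, of_apply, G.adj_comm]

lemma adjM_injective : Function.Injective (adjM : SimpleGraph V → Matrix V V ℚ) := by
  intro G G' h
  ext x y
  have hxy := congrFun (congrFun h x) y
  simp only [adjM, of_apply] at hxy
  split_ifs at hxy <;> simp_all

lemma sum_adjM_eq_nbrCount (G : SimpleGraph V) (x : V) (c : Finset V) :
    ∑ z ∈ c, adjM G x z = nbrCount G x c := by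
  simp only [adjM, of_apply, sum_boole, nbrCount]

lemma sum_adjM_eq_nbrCount' (G : SimpleGraph V) (x : V) (c : Finset V) :
    ∑ z ∈ c, adjM G z x = nbrCount G x c := by
  simp only [← transpose_apply (adjM G) x, adjM_transpose, sum_adjM_eq_nbrCount]

lemma not_adj_of_nbrCount_eq_zero {c : Finset V} (h : nbrCount G x c = 0) (hy : y ∈ c) :
    ¬ G.Adj x y := by
  rw [nbrCount, card_filter_eq_zero_iff] at h
  exact h y hy

lemma adj_of_nbrCount_eq_card {c : Finset V} (h : nbrCount G x c = #c) (hy : y ∈ c) :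
    G.Adj x y := by
  rw [nbrCount, card_filter_eq_iff] at h
  exact h y hy

lemma card_mul_nbrCount_eq (hE : IsEquitableOn G C) (hx : x ∈ C i) (hy : y ∈ C j) :
    #(C i) * nbrCount G x (C j) = #(C j) * nbrCount G y (C i) := by
  have hcount : ∑ a ∈ C i, nbrCount G a (C j) = ∑ b ∈ C j, nbrCount G b (C i) := by
    simpa only [bipartiteAbove, bipartiteBelow, nbrCount, G.adj_comm] using
      sum_card_bipartiteAbove_eq_sum_card_bipartiteBelow (s := C i) (t := C j) (r := G.Adj)
  rwa [sum_congr rfl fun a ha => hE i j a ha x hx, sum_congr rfl fun b hb => hE j i b hb y hy,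
    sum_const, sum_const, smul_eq_mul, smul_eq_mul] at hcount

lemma GMswitch_adj_iff_of_mem_D_iff (hP : IsPartitionWithCell C D) (hxy : x ∈ D ↔ y ∈ D) :
    (GMswitch G C D).Adj x y ↔ G.Adj x y := by
  have hflip : ¬ ∃ i, (x ∈ D ∧ y ∈ C i ∧ 2 * nbrCount G x (C i) = #(C i)) ∨
      (y ∈ D ∧ x ∈ C i ∧ 2 * nbrCount G y (C i) = #(C i)) := by
    rintro ⟨i, ⟨hx, hy, -⟩ | ⟨hy, hx, -⟩⟩
    · exact disjoint_left.mp (hP.2.2.2.1 i) hy (hxy.mp hx)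
    · exact disjoint_left.mp (hP.2.2.2.1 i) hx (hxy.mpr hy)
  constructor
  · rintro ⟨-, ⟨ha, -⟩ | ⟨hf, -⟩⟩
    exacts [ha, absurd hf hflip]
  · exact fun ha => ⟨G.ne_of_adj ha, Or.inl ⟨ha, hflip⟩⟩

lemma GMswitch_adj_iff_of_mem_D_of_mem_cell (hP : IsPartitionWithCell C D) (hx : x ∈ D)
    (hy : y ∈ C j) :
    (GMswitch G C D).Adj x y ↔ (G.Adj x y ↔ 2 * nbrCount G x (C j) ≠ #(C j)) := by
  have hyD : y ∉ D := disjoint_left.mp (hP.2.2.2.1 j) hy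
  have hflip : (∃ i, (x ∈ D ∧ y ∈ C i ∧ 2 * nbrCount G x (C i) = #(C i)) ∨
      (y ∈ D ∧ x ∈ C i ∧ 2 * nbrCount G y (C i) = #(C i))) ↔
      2 * nbrCount G x (C j) = #(C j) := by
    refine ⟨?_, fun h => ⟨j, Or.inl ⟨hx, hy, h⟩⟩⟩
    rintro ⟨i, ⟨-, hyi, h⟩ | ⟨hyD', -⟩⟩
    · rwa [hP.2.2.1.eq (not_disjoint_iff.2 ⟨y, hyi, hy⟩)] at h
    · exact absurd hyD' hyD
  have hne : x ≠ y := by rintro rfl; exact hyD hx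
  change x ≠ y ∧ ((G.Adj x y ∧ ¬ _) ∨ (_ ∧ ¬ G.Adj x y)) ↔ _
  rw [hflip]
  tauto

lemma adjM_GMswitch_apply_of_mem_D_of_mem_cell (hGM : IsGMPartition G C D) (hx : x ∈ D)
    (hy : y ∈ C j) :
    adjM (GMswitch G C D) x y
      = 2 / (#(C j) : ℚ) * nbrCount G x (C j) - adjM G x y := by
  obtain ⟨hP, -, hH⟩ := hGM
  have hcard : #(C j) ≠ 0 := card_ne_zero_of_mem hy
  have hsw := GMswitch_adj_iff_of_mem_D_of_mem_cell (G := G) hP hx hy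
  rcases hH x hx j with h0 | hhalf | hfull
  · have hna := not_adj_of_nbrCount_eq_zero h0 hy
    simp [adjM, hsw, hna, h0, Ne.symm hcard]
  · have hhalf' : 2 * (nbrCount G x (C j) : ℚ) = #(C j) := by exact_mod_cast hhalf
    have hone : 2 / (#(C j) : ℚ) * nbrCount G x (C j) = 1 := by
      rw [div_mul_eq_mul_div, hhalf', div_self (Nat.cast_ne_zero.mpr hcard)]
    by_cases ha : G.Adj x y <;> simp [adjM, hsw, ha, hhalf, hone]
  · have ha := adj_of_nbrCount_eq_card hfull hy
    norm_num [adjM, hsw, ha, hfull, hcard]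

end Switching

section Conjugation
variable {V ι : Type*} [Fintype V] [DecidableEq V] {G : SimpleGraph V} {C : ι → Finset V}
  {D : Finset V} {x y : V}

lemma switchMatrix_conj_adjM_apply_of_mem_D (hGM : IsGMPartition G C D) (hx : x ∈ D) :
    (switchMatrix C D * adjM G * switchMatrix C D) x y = adjM (GMswitch G C D) x y := by
  have hP := hGM.1
  rw [Matrix.mul_assoc, switchMatrix_mul_apply_of_mem_D hP hx]
  rcases hP.2.2.2.2 y with hy | ⟨j, hy⟩
  · simp only [mul_switchMatrix_apply_of_mem_D hP hy, adjM, of_apply,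
      GMswitch_adj_iff_of_mem_D_iff hP (iff_of_true hx hy)]
  · rw [mul_switchMatrix_apply_of_mem_cell hP hy, sum_adjM_eq_nbrCount,
      adjM_GMswitch_apply_of_mem_D_of_mem_cell hGM hx hy]

lemma switchMatrix_conj_adjM_apply_of_mem_cell {i j : ι} (hGM : IsGMPartition G C D)
    (hx : x ∈ C i) (hy : y ∈ C j) :
    (switchMatrix C D * adjM G * switchMatrix C D) x y = adjM (GMswitch G C D) x y := by
  obtain ⟨hP, hE, -⟩ := hGM
  have hnotD : ∀ {z k}, z ∈ C k → z ∉ D := fun hz => disjoint_left.mp (hP.2.2.2.1 _) hz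
  have hci : (#(C i) : ℚ) ≠ 0 := Nat.cast_ne_zero.mpr (card_ne_zero_of_mem hx)
  have hcj : (#(C j) : ℚ) ≠ 0 := Nat.cast_ne_zero.mpr (card_ne_zero_of_mem hy)
  have hQA : ∀ w, (switchMatrix C D * adjM G) x w
      = 2 / (#(C i) : ℚ) * nbrCount G w (C i) - adjM G x w := fun w => by
    rw [switchMatrix_mul_apply_of_mem_cell hP hx, sum_adjM_eq_nbrCount']
  have hconst : ∀ w ∈ C j, nbrCount G w (C i) = nbrCount G y (C i) :=
    fun w hw => hE j i w hw y hy
  have hdouble : (#(C i) : ℚ) * nbrCount G x (C j) = #(C j) * nbrCount G y (C i) := by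
    exact_mod_cast card_mul_nbrCount_eq hE hx hy
  rw [mul_switchMatrix_apply_of_mem_cell hP hy, sum_congr rfl fun w hw => by
      rw [hQA, hconst w hw], hQA, sum_sub_distrib, sum_adjM_eq_nbrCount, sum_const,
    nsmul_eq_mul, adjM, adjM, of_apply, of_apply,
    GMswitch_adj_iff_of_mem_D_iff hP (iff_of_false (hnotD hx) (hnotD hy))]
  field_simp
  linear_combination (-2 : ℚ) * hdouble

theorem switchMatrix_conj_adjM (hGM : IsGMPartition G C D) :
    switchMatrix C D * adjM G * switchMatrix C D = adjM (GMswitch G C D) := by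
  have hP := hGM.1
  ext x y
  rcases hP.2.2.2.2 x with hx | ⟨i, hx⟩
  · exact switchMatrix_conj_adjM_apply_of_mem_D hGM hx
  rcases hP.2.2.2.2 y with hy | ⟨j, hy⟩
  · have hsymm : (switchMatrix C D * adjM G * switchMatrix C D)ᵀ
        = switchMatrix C D * adjM G * switchMatrix C D := by
      rw [transpose_mul, transpose_mul, switchMatrix_transpose hP, adjM_transpose,
        Matrix.mul_assoc]
    rw [← hsymm, transpose_apply, switchMatrix_conj_adjM_apply_of_mem_D hGM hy,
      ← transpose_apply (adjM _), adjM_transpose]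
  · exact switchMatrix_conj_adjM_apply_of_mem_cell hGM hx hy

lemma switchMatrix_conj_stdMats (hGM : IsGMPartition G C D) (k : Fin 3) :
    switchMatrix C D * stdMats G k * switchMatrix C D = stdMats (GMswitch G C D) k := by
  have hP := hGM.1
  fin_cases k
  · simp [stdMats, switchMatrix_mul_self hP]
  · exact switchMatrix_conj_adjM hGM
  · simp only [stdMats, Fin.reduceFinMk, Matrix.cons_val, Matrix.mul_sub, Matrix.sub_mul,
      Matrix.mul_one, switchMatrix_mul_self hP, switchMatrix_mul_allOnes hP,
      allOnes_mul_switchMatrix hP, switchMatrix_conj_adjM hGM]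

end Conjugation

section UnifiedProduct
variable {V W : Type*} {G : SimpleGraph V} {H : SimpleGraph W} {s : Fin 3 → Fin 3 → ℚ}

/-- `(0, 0)` is excluded because `unifiedProd` has no loops whatever `s 0 0` is. -/
def UnifiedRel (s : Fin 3 → Fin 3 → ℚ) (i j : Fin 3) : Prop :=
  (i ≠ 0 ∨ j ≠ 0) ∧ s i j = 1

lemma unifiedProd_adj_iff {p q : V × W} :
    (unifiedProd G H s).Adj p q ↔ UnifiedRel s (relIdx G p.1 q.1) (relIdx H p.2 q.2) := by
  simp only [unifiedProd, relOfIdx_iff_relIdx_eq, UnifiedRel, ne_eq, relIdx_eq_zero_iff,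
    Prod.ext_iff, not_and_or]
  aesop

lemma stdMats_apply [DecidableEq V] (G : SimpleGraph V) (k : Fin 3) (x y : V) :
    stdMats G k x y = if relIdx G x y = k then 1 else 0 := by
  unfold relIdx
  by_cases hxy : x = y
  · subst hxy
    fin_cases k <;> simp [stdMats, adjM, allOnes]
  · by_cases ha : G.Adj x y <;> fin_cases k <;>
      simp [stdMats, adjM, allOnes, hxy, ha]

lemma adjM_unifiedProd [DecidableEq V] [DecidableEq W] :
    adjM (unifiedProd G H s)
      = ∑ i, ∑ j, (if UnifiedRel s i j then 1 else 0 : ℚ) • (stdMats G i ⊗ₖ stdMats H j) := by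
  ext p q
  simp only [Matrix.sum_apply, Matrix.smul_apply, kroneckerMap_apply, stdMats_apply,
    smul_eq_mul, mul_ite, mul_one, mul_zero, sum_ite_eq, mem_univ, if_true, adjM, of_apply,
    unifiedProd_adj_iff]

lemma kronecker_one_conj_adjM_unifiedProd [Fintype V] [DecidableEq V] [Fintype W]
    [DecidableEq W] {G' : SimpleGraph V} {Q : Matrix V V ℚ}
    (hQ : ∀ k, Q * stdMats G k * Q = stdMats G' k) (H : SimpleGraph W)
    (s : Fin 3 → Fin 3 → ℚ) :
    (Q ⊗ₖ (1 : Matrix W W ℚ)) * adjM (unifiedProd G H s) * (Q ⊗ₖ (1 : Matrix W W ℚ))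
      = adjM (unifiedProd G' H s) := by
  simp only [adjM_unifiedProd, Matrix.mul_sum, Matrix.sum_mul, Matrix.mul_smul,
    Matrix.smul_mul, ← mul_kronecker_mul, hQ, Matrix.one_mul, Matrix.mul_one]

end UnifiedProduct

section RelCount
variable {V : Type*} {G : SimpleGraph V} {x : V} {c : Finset V}

noncomputable def relCount (G : SimpleGraph V) (x : V) (c : Finset V) (k : Fin 3) : ℕ :=
  #{y ∈ c | relIdx G x y = k}

lemma sum_relCount : ∑ k, relCount G x c k = #c :=
  (card_eq_sum_card_fiberwise fun _ _ => mem_coe.mpr (mem_univ _)).symm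

lemma relCount_zero [DecidableEq V] : relCount G x c 0 = if x ∈ c then 1 else 0 := by
  simp only [relCount, relIdx_eq_zero_iff, filter_eq, apply_ite card, card_singleton,
    card_empty]

lemma relCount_one : relCount G x c 1 = nbrCount G x c := by
  simp only [relCount, relIdx_eq_one_iff, nbrCount]

lemma relCount_eq_of_isEquitableOn {ι : Type*} {C : ι → Finset V} {y : V} {i : ι}
    (hdis : Pairwise fun i j => Disjoint (C i) (C j)) (hE : IsEquitableOn G C)
    (hx : x ∈ C i) (hy : y ∈ C i) (j : ι) (k : Fin 3) :
    relCount G x (C j) k = relCount G y (C j) k := by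
  have hmem : x ∈ C j ↔ y ∈ C j :=
    ⟨fun h => hdis.eq (not_disjoint_iff.2 ⟨x, hx, h⟩) ▸ hy,
      fun h => hdis.eq (not_disjoint_iff.2 ⟨y, hy, h⟩) ▸ hx⟩
  have h0 : relCount G x (C j) 0 = relCount G y (C j) 0 := by
    simp only [relCount_zero, hmem]
  have h1 : relCount G x (C j) 1 = relCount G y (C j) 1 := by
    simp only [relCount_one, hE i j x hx y hy]
  have hsum : ∑ k, relCount G x (C j) k = ∑ k, relCount G y (C j) k := by
    rw [sum_relCount, sum_relCount]
  simp only [Fin.sum_univ_three] at hsum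
  fin_cases k <;> simp only [Fin.zero_eta, Fin.mk_one, Fin.reduceFinMk] <;> omega

end RelCount

section ProductPartition
variable {V W ι : Type*} {C : ι → Finset V} {D : Finset V}

lemma nbrCount_unifiedProd (G : SimpleGraph V) (H : SimpleGraph W) (s : Fin 3 → Fin 3 → ℚ)
    (x : V) (u w : W) (c : Finset V) :
    nbrCount (unifiedProd G H s) (x, u) (c ×ˢ {w})
      = ∑ k, if UnifiedRel s k (relIdx H u w) then relCount G x c k else 0 := by
  rw [nbrCount, product_singleton, filter_map, card_map, card_eq_sum_card_fiberwise
    (f := relIdx G x) (t := univ) fun _ _ => mem_coe.mpr (mem_univ _)]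
  refine sum_congr rfl fun k _ => ?_
  rw [filter_filter, relCount]
  split_ifs with hk
  · congr 1
    refine filter_congr fun y _ => ?_
    simp only [Function.Embedding.coeFn_mk, Function.comp_apply, unifiedProd_adj_iff]
    constructor
    · exact And.right
    · rintro rfl; exact ⟨hk, rfl⟩
  · rw [card_eq_zero, filter_eq_empty_iff]
    rintro y - ⟨hy, rfl⟩
    simp only [Function.comp_apply, Function.Embedding.coeFn_mk, unifiedProd_adj_iff] at hy
    exact hk hy

lemma pairwise_disjoint_product_singleton (hdis : Pairwise fun i j => Disjoint (C i) (C j)) :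
    Pairwise fun c d : ι × W => Disjoint (C c.1 ×ˢ {c.2}) (C d.1 ×ˢ {d.2}) := by
  rintro ⟨i, u⟩ ⟨j, w⟩ hne
  rw [disjoint_product]
  by_cases hij : i = j
  · subst hij
    exact Or.inr (disjoint_singleton.mpr fun huw => hne (Prod.ext rfl huw))
  · exact Or.inl (hdis hij)

lemma isPartitionWithCell_product [Fintype W] [Nonempty W] (hP : IsPartitionWithCell C D) :
    IsPartitionWithCell (fun c : ι × W => C c.1 ×ˢ {c.2}) (D ×ˢ (univ : Finset W)) := by
  obtain ⟨hC, hD, hdis, hCD, hcover⟩ := hP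
  refine ⟨fun c => (hC c.1).product (singleton_nonempty c.2), hD.product univ_nonempty,
    pairwise_disjoint_product_singleton hdis, fun c => disjoint_product.mpr (Or.inl (hCD c.1)),
    fun ⟨x, u⟩ => ?_⟩
  rcases hcover x with hx | ⟨i, hx⟩
  · exact Or.inl (mem_product.mpr ⟨hx, mem_univ u⟩)
  · exact Or.inr ⟨(i, u), mem_product.mpr ⟨hx, mem_singleton_self u⟩⟩

variable {G : SimpleGraph V} (H : SimpleGraph W) (s : Fin 3 → Fin 3 → ℚ)

lemma isEquitableOn_unifiedProd (hdis : Pairwise fun i j => Disjoint (C i) (C j))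
    (hE : IsEquitableOn G C) :
    IsEquitableOn (unifiedProd G H s) (fun c : ι × W => C c.1 ×ˢ {c.2}) := by
  rintro ⟨i, w₀⟩ ⟨j, w⟩ ⟨x, u⟩ hx ⟨y, v⟩ hy
  simp only [mem_product, mem_singleton] at hx hy
  obtain ⟨hx, rfl⟩ := hx
  obtain ⟨hy, rfl⟩ := hy
  simp only [nbrCount_unifiedProd, relCount_eq_of_isEquitableOn hdis hE hx hy]

lemma GMhalf_unifiedProd [Fintype W] (hP : IsPartitionWithCell C D) (hH : GMhalf G C D) :
    GMhalf (unifiedProd G H s) (fun c : ι × W => C c.1 ×ˢ {c.2}) (D ×ˢ (univ : Finset W)) := by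
  rintro ⟨x, u⟩ hxu ⟨j, w⟩
  have hx : x ∈ D := (mem_product.mp hxu).1
  have hxC : x ∉ C j := fun h => disjoint_left.mp (hP.2.2.2.1 j) h hx
  have hsum := sum_relCount (G := G) (x := x) (c := C j)
  simp only [Fin.sum_univ_three, relCount_zero, if_neg hxC, relCount_one] at hsum
  simp only [nbrCount_unifiedProd, card_product, card_singleton, mul_one, Fin.sum_univ_three,
    relCount_zero, if_neg hxC, relCount_one, ite_self]
  rcases hH x hx j with h | h | h <;> split_ifs <;> omega

lemma isGMPartition_unifiedProd [Fintype W] [Nonempty W] (hGM : IsGMPartition G C D) :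
    IsGMPartition (unifiedProd G H s) (fun c : ι × W => C c.1 ×ˢ {c.2})
      (D ×ˢ (univ : Finset W)) :=
  ⟨isPartitionWithCell_product hGM.1, isEquitableOn_unifiedProd H s hGM.1.2.2.1 hGM.2.1,
    GMhalf_unifiedProd H s hGM.1 hGM.2.2⟩

lemma switchMatrix_product [Fintype W] [DecidableEq V] [DecidableEq W]
    (hdis : Pairwise fun i j => Disjoint (C i) (C j)) :
    switchMatrix (fun c : ι × W => C c.1 ×ˢ {c.2}) (D ×ˢ (univ : Finset W))
      = switchMatrix C D ⊗ₖ (1 : Matrix W W ℚ) := by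
  have hdis' := pairwise_disjoint_product_singleton (W := W) hdis
  ext ⟨x, u⟩ ⟨y, w⟩
  rw [kroneckerMap_apply]
  by_cases huw : u = w
  · subst huw
    by_cases h : ∃ i, x ∈ C i ∧ y ∈ C i
    · obtain ⟨i, hx, hy⟩ := h
      rw [switchMatrix_apply_of_mem_cell hdis' (i := (i, u)) (mem_product.mpr ⟨hx,
        mem_singleton_self u⟩) (mem_product.mpr ⟨hy, mem_singleton_self u⟩),
        switchMatrix_apply_of_mem_cell hdis hx hy]
      simp [one_apply]
    · rw [switchMatrix_apply_of_not_mem_cell h, switchMatrix_apply_of_not_mem_cell]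
      · simp [one_apply]
      · rintro ⟨c, hx, hy⟩
        simp only [mem_product, mem_singleton] at hx hy
        exact h ⟨c.1, hx.1, hy.1⟩
  · rw [one_apply_ne huw, mul_zero, switchMatrix_apply_of_not_mem_cell]
    · simp [one_apply, huw]
    · rintro ⟨c, hx, hy⟩
      simp only [mem_product, mem_singleton] at hx hy
      exact huw (hx.2.trans hy.2.symm)

end ProductPartition

lemma GMswitch_unifiedProd {V W ι : Type*} [Fintype V] [DecidableEq V] [Fintype W]
    [DecidableEq W] {G : SimpleGraph V} {C : ι → Finset V} {D : Finset V}
    (hGM : IsGMPartition G C D) (H : SimpleGraph W) (s : Fin 3 → Fin 3 → ℚ) :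
    GMswitch (unifiedProd G H s) (fun c : ι × W => C c.1 ×ˢ {c.2}) (D ×ˢ (univ : Finset W))
      = unifiedProd (GMswitch G C D) H s := by
  -- for empty `W` the cell `D ×ˢ univ` is empty, so `Π` is not a partition
  cases isEmpty_or_nonempty W
  · ext ⟨_, w⟩
    exact isEmptyElim w
  apply adjM_injective
  rw [← switchMatrix_conj_adjM (isGMPartition_unifiedProd H s hGM),
    switchMatrix_product hGM.1.2.2.1,
    kronecker_one_conj_adjM_unifiedProd (switchMatrix_conj_stdMats hGM)]

theorem switch_unifiedProd_compat_general {V W : Type*} [Fintype V]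
    [Fintype W] [DecidableEq W] (G : SimpleGraph V) (H : SimpleGraph W)
    (s : Fin 3 → Fin 3 → ℚ)
    {t : ℕ} (C : Fin t → Finset V) (D : Finset V)
    (hGM : IsGMPartition G C D) :
    switchMatrix (fun c : Fin t × W => C c.1 ×ˢ ({c.2} : Finset W))
        (D ×ˢ (Finset.univ : Finset W))
      = switchMatrix C D ⊗ₖ (1 : Matrix W W ℚ)
    ∧ (switchMatrix C D ⊗ₖ (1 : Matrix W W ℚ)) * adjM (unifiedProd G H s)
          * (switchMatrix C D ⊗ₖ (1 : Matrix W W ℚ))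
        = adjM (unifiedProd (GMswitch G C D) H s)
    ∧ Nonempty (GMswitch (unifiedProd G H s)
          (fun c : Fin t × W => C c.1 ×ˢ ({c.2} : Finset W))
          (D ×ˢ (Finset.univ : Finset W))
        ≃g unifiedProd (GMswitch G C D) H s) :=
  ⟨switchMatrix_product hGM.1.2.2.1,
    kronecker_one_conj_adjM_unifiedProd (switchMatrix_conj_stdMats hGM) H s,
    ⟨GMswitch_unifiedProd hGM H s ▸ SimpleGraph.Iso.refl⟩⟩

/-- the switching matrix of the induced partition `Π` is `Q ⊗ I`;
conjugating `A(Γ ⋆ Δ)` by `Q ⊗ I` gives `A((sw_π Γ) ⋆ Δ)`; consequently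
`(sw_π Γ) ⋆ Δ` is isomorphic to `sw_Π (Γ ⋆ Δ)`. -/
theorem switch_unifiedProd_compat {V W : Type*} [Fintype V] [DecidableEq V]
    [Fintype W] [DecidableEq W] (G : SimpleGraph V) (H : SimpleGraph W)
    (s : Fin 3 → Fin 3 → ℚ) (hs : ∀ i j, s i j = 0 ∨ s i j = 1) (hs00 : s 0 0 = 0)
    {t : ℕ} (C : Fin t → Finset V) (D : Finset V)
    (hGM : IsGMPartition G C D) :
    switchMatrix (fun c : Fin t × W => C c.1 ×ˢ ({c.2} : Finset W))
        (D ×ˢ (Finset.univ : Finset W))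
      = switchMatrix C D ⊗ₖ (1 : Matrix W W ℚ)
    ∧ (switchMatrix C D ⊗ₖ (1 : Matrix W W ℚ)) * adjM (unifiedProd G H s)
          * (switchMatrix C D ⊗ₖ (1 : Matrix W W ℚ))
        = adjM (unifiedProd (GMswitch G C D) H s)
    ∧ Nonempty (GMswitch (unifiedProd G H s)
          (fun c : Fin t × W => C c.1 ×ˢ ({c.2} : Finset W))
          (D ×ˢ (Finset.univ : Finset W))
        ≃g unifiedProd (GMswitch G C D) H s) :=
  switch_unifiedProd_compat_general G H s C D hGM
end

section
/- For all integers m ≥ 1 and n ≥ 0, the Doob graph D(m,n) can be obtained from the Hamming graph H(2m+n, 4) by applying Godsil–McKay switching m times: there exist finite simple graphs Γ₀, Γ₁, …, Γ_m with Γ₀ = H(2m+n,4) and Γ_m ≅ D(m,n), such that for each k ∈ {1, …, m}, Γ_k = sw_{π_k} Γ_{k−1} for some Godsil–McKay partition π_k of V(Γ_{k−1}). -/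
open Classical Matrix Kronecker

/-- The Hamming graph `H(2,4) = K₄ □ K₄`. -/
def H24 : SimpleGraph (Fin 4 × Fin 4) :=
  SimpleGraph.boxProd (⊤ : SimpleGraph (Fin 4)) (⊤ : SimpleGraph (Fin 4))

/-- The diagonal `C = {(x,x) : x ∈ [4]}` of the vertex set of `H(2,4)`. -/
def diagC : Finset (Fin 4 × Fin 4) := Finset.univ.filter fun p => p.1 = p.2

/-- The Shrikhande graph, obtained from `H(2,4)` by Godsil–McKay switching with
respect to the partition `{C, V \ C}`. -/
def Shrikhande : SimpleGraph (Fin 4 × Fin 4) :=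
  GMswitch H24 (fun _ : Fin 1 => diagC) diagCᶜ

/-- The Hamming graph `H(d,4)`, the Cartesian product of `d` copies of `K₄`. -/
def HamGraph (d : ℕ) : SimpleGraph (Fin d → Fin 4) where
  Adj f g := ∃ i, f i ≠ g i ∧ ∀ j, j ≠ i → f j = g j
  symm := by
    constructor
    rintro f g ⟨i, h1, h2⟩
    exact ⟨i, h1.symm, fun j hj => (h2 j hj).symm⟩
  loopless := by constructor; rintro f ⟨i, h1, -⟩; exact h1 rfl

/-- The Doob graph `D(m,n)`, the Cartesian product of `m` copies of the
Shrikhande graph and `n` copies of `K₄`. -/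
def DoobGraph (m n : ℕ) :
    SimpleGraph ((Fin m → Fin 4 × Fin 4) × (Fin n → Fin 4)) where
  Adj p q :=
    (∃ i, Shrikhande.Adj (p.1 i) (q.1 i) ∧ (∀ j, j ≠ i → p.1 j = q.1 j) ∧ p.2 = q.2) ∨
    (∃ i, p.2 i ≠ q.2 i ∧ (∀ j, j ≠ i → p.2 j = q.2 j) ∧ p.1 = q.1)
  symm := by
    constructor
    rintro p q (⟨i, h1, h2, h3⟩ | ⟨i, h1, h2, h3⟩)
    · exact Or.inl ⟨i, h1.symm, fun j hj => (h2 j hj).symm, h3.symm⟩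
    · exact Or.inr ⟨i, h1.symm, fun j hj => (h2 j hj).symm, h3.symm⟩
  loopless := by
    constructor
    rintro p (⟨i, h1, -⟩ | ⟨i, h1, -⟩)
    · exact Shrikhande.loopless.irrefl _ h1
    · exact h1 rfl

/-!
Godsil–McKay switching commutes with Cartesian products: if `π = {C₁, …, C_t, D}` is a
Godsil–McKay partition of `G`, the cells `Cᵢ × {w}` together with `D × V(H)` form one of
`G □ H`, and switching it yields `sw_π G □ H`. Since `Sh = sw H(2,4)`, regroup the `2m + n`
coordinates of `H(2m+n,4)` into `m` pairs and `n` single coordinates; switching the pairs one at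
a time replaces each factor `H(2,4)` by `Sh`, passing from `H(2,4)^m □ K₄^n` to
`Sh^m □ K₄^n = D(m,n)`.
-/

open SimpleGraph

def IsGMSwitching {V : Type*} (G G' : SimpleGraph V) : Prop :=
  ∃ (t : ℕ) (C : Fin t → Finset V) (D : Finset V), IsGMPartition G C D ∧ G' = GMswitch G C D

section GodsilMcKay

variable {V W ι : Type*}

@[simp]
lemma GMswitch_adj (G : SimpleGraph V) (C : ι → Finset V) (D : Finset V) (x y : V) :
    (GMswitch G C D).Adj x y ↔ x ≠ y ∧ Xor (G.Adj x y)
      (∃ i, (x ∈ D ∧ y ∈ C i ∧ 2 * nbrCount G x (C i) = (C i).card) ∨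
        (y ∈ D ∧ x ∈ C i ∧ 2 * nbrCount G y (C i) = (C i).card)) :=
  Iff.rfl

lemma IsGMPartition.reindex {G : SimpleGraph V} {C : ι → Finset V} {D : Finset V}
    {κ : Type*} (σ : κ ≃ ι) (h : IsGMPartition G C D) : IsGMPartition G (C ∘ σ) D := by
  obtain ⟨⟨hne, hD, hdisj, hdisjD, hcover⟩, heq, hhalf⟩ := h
  refine ⟨⟨fun i => hne _, hD, fun i j hij => hdisj (σ.injective.ne hij), fun i => hdisjD _,
    fun x => ?_⟩, fun i j => heq _ _, fun x hx i => hhalf x hx _⟩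
  obtain hx | ⟨i, hi⟩ := hcover x
  · exact Or.inl hx
  · exact Or.inr ⟨σ.symm i, by simpa using hi⟩

lemma GMswitch_reindex (G : SimpleGraph V) (C : ι → Finset V) (D : Finset V)
    {κ : Type*} (σ : κ ≃ ι) : GMswitch G (C ∘ σ) D = GMswitch G C D := by
  ext x y
  simp only [GMswitch_adj, Function.comp_apply]
  rw [σ.exists_congr_left]
  simp

lemma IsGMPartition.isGMSwitching [Fintype ι] {G : SimpleGraph V} {C : ι → Finset V}
    {D : Finset V} (h : IsGMPartition G C D) : IsGMSwitching G (GMswitch G C D) :=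
  ⟨_, C ∘ (Fintype.equivFin ι).symm, D, h.reindex _, (GMswitch_reindex G C D _).symm⟩

lemma nbrCount_comap (e : V ≃ W) (G : SimpleGraph W) (v : V) (c : Finset W) :
    nbrCount (G.comap e) v (c.map e.symm.toEmbedding) = nbrCount G (e v) c := by
  simp [nbrCount, Finset.filter_map]

lemma IsGMPartition.comap (e : V ≃ W) {G : SimpleGraph W} {C : ι → Finset W} {D : Finset W}
    (h : IsGMPartition G C D) :
    IsGMPartition (G.comap e) (fun i => (C i).map e.symm.toEmbedding)
      (D.map e.symm.toEmbedding) := by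
  obtain ⟨⟨hne, hD, hdisj, hdisjD, hcover⟩, heq, hhalf⟩ := h
  refine ⟨⟨fun i => (hne i).map, hD.map, fun i j hij => ?_, fun i => ?_, fun x => ?_⟩,
    ?_, ?_⟩
  · simpa [Finset.disjoint_map] using hdisj hij
  · simpa [Finset.disjoint_map] using hdisjD i
  · simpa using hcover (e x)
  · intro i j x hx y hy
    simp only [nbrCount_comap]
    exact heq i j _ (by simpa using hx) _ (by simpa using hy)
  · intro x hx i
    simpa [nbrCount_comap] using hhalf _ (by simpa using hx) i

lemma GMswitch_comap (e : V ≃ W) (G : SimpleGraph W) (C : ι → Finset W) (D : Finset W) :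
    GMswitch (G.comap e) (fun i => (C i).map e.symm.toEmbedding) (D.map e.symm.toEmbedding) =
      (GMswitch G C D).comap e := by
  ext x y
  simp [nbrCount_comap]

lemma IsGMSwitching.comap (e : V ≃ W) {G G' : SimpleGraph W} (h : IsGMSwitching G G') :
    IsGMSwitching (G.comap e) (G'.comap e) := by
  obtain ⟨t, C, D, hGM, rfl⟩ := h
  exact ⟨t, _, _, hGM.comap e, (GMswitch_comap e G C D).symm⟩

end GodsilMcKay

section BoxProd

variable {V W ι : Type*} {G : SimpleGraph V} {H : SimpleGraph W}

lemma nbrCount_boxProd_prod_singleton (x : V) (w w' : W) (c : Finset V) :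
    nbrCount (G □ H) (x, w) (c ×ˢ {w'}) =
      if w = w' then nbrCount G x c else if x ∈ c ∧ H.Adj w w' then 1 else 0 := by
  rw [nbrCount, Finset.product_singleton, Finset.filter_map, Finset.card_map]
  split_ifs with hw hxc
  · subst hw
    simp [nbrCount]
  · rw [Finset.card_eq_one]
    refine ⟨x, Finset.eq_singleton_iff_unique_mem.2 ⟨?_, fun y hy => ?_⟩⟩
    · simp [hxc.1, hxc.2]
    · simp_all
  · simp only [Finset.card_eq_zero, Finset.filter_eq_empty_iff]
    rintro y hy ((⟨-, rfl⟩ | ⟨hadj, rfl⟩))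
    exacts [hw rfl, hxc ⟨hy, hadj⟩]

variable {C : ι → Finset V} {D : Finset V}

lemma IsPartitionWithCell.mem_iff_eq (h : IsPartitionWithCell C D) {x : V} {i j : ι}
    (hx : x ∈ C i) : x ∈ C j ↔ i = j := by
  refine ⟨fun hj => ?_, fun hij => hij ▸ hx⟩
  by_contra hij
  exact Finset.disjoint_left.1 (h.2.2.1 hij) hx hj

lemma IsPartitionWithCell.notMem_cell_of_mem (h : IsPartitionWithCell C D) {x : V} (hx : x ∈ D)
    (i : ι) : x ∉ C i :=
  fun hi => Finset.disjoint_left.1 (h.2.2.2.1 i) hi hx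

lemma IsGMPartition.boxProd [Fintype W] [Nonempty W] (h : IsGMPartition G C D) :
    IsGMPartition (G □ H) (fun p : ι × W => C p.1 ×ˢ {p.2}) (D ×ˢ Finset.univ) := by
  obtain ⟨hP, heq, hhalf⟩ := h
  have ⟨hne, hD, hdisj, hdisjD, hcover⟩ := hP
  refine ⟨⟨fun p => (hne p.1).product (Finset.singleton_nonempty _),
    hD.product Finset.univ_nonempty, fun p q hpq => ?_, fun p => ?_, fun x => ?_⟩, ?_, ?_⟩
  · show Disjoint (_ ×ˢ _) (_ ×ˢ _)
    rw [Finset.disjoint_product]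
    by_cases h1 : p.1 = q.1
    · exact Or.inr (Finset.disjoint_singleton.2 fun h2 => hpq (Prod.ext h1 h2))
    · exact Or.inl (hdisj h1)
  · exact Finset.disjoint_product.2 (Or.inl (hdisjD p.1))
  · obtain hx | ⟨i, hi⟩ := hcover x.1
    · exact Or.inl (by simpa using hx)
    · exact Or.inr ⟨(i, x.2), by simpa using hi⟩
  · rintro ⟨i, w⟩ ⟨j, w'⟩ ⟨x, v⟩ hx ⟨y, v'⟩ hy
    simp only [Finset.mem_product, Finset.mem_singleton] at hx hy
    obtain ⟨hx, rfl⟩ := hx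
    obtain ⟨hy, rfl⟩ := hy
    simp only [nbrCount_boxProd_prod_singleton, hP.mem_iff_eq hx, hP.mem_iff_eq hy,
      heq i j x hx y hy]
  · rintro ⟨x, v⟩ hx ⟨i, w⟩
    simp only [Finset.mem_product, Finset.mem_univ, and_true] at hx
    simp only [nbrCount_boxProd_prod_singleton, Finset.card_product, Finset.card_singleton,
      mul_one, hP.notMem_cell_of_mem hx i, false_and, if_false]
    split_ifs
    · exact hhalf x hx i
    · exact Or.inl rfl

lemma two_mul_nbrCount_boxProd_eq_card_iff {x : V} {c : Finset V} (hx : x ∉ c)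
    (hc : c.Nonempty) (w w' : W) :
    2 * nbrCount (G □ H) (x, w) (c ×ˢ {w'}) = (c ×ˢ {w'}).card ↔
      w = w' ∧ 2 * nbrCount G x c = c.card := by
  rw [nbrCount_boxProd_prod_singleton, Finset.card_product, Finset.card_singleton, mul_one]
  by_cases hw : w = w' <;> simp [hw, hx, hc.card_pos.ne]

lemma boxProd_switchable_iff [Fintype W] (h : IsPartitionWithCell C D) (x y : V) (w w' : W) (i : ι)
    (v : W) :
    ((x, w) ∈ D ×ˢ Finset.univ ∧ (y, w') ∈ C i ×ˢ {v} ∧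
        2 * nbrCount (G □ H) (x, w) (C i ×ˢ {v}) = (C i ×ˢ {v}).card) ↔
      v = w' ∧ w = w' ∧ x ∈ D ∧ y ∈ C i ∧ 2 * nbrCount G x (C i) = (C i).card := by
  simp only [Finset.mem_product, Finset.mem_univ, and_true, Finset.mem_singleton]
  constructor
  · rintro ⟨hx, ⟨hy, rfl⟩, hc⟩
    rw [two_mul_nbrCount_boxProd_eq_card_iff (h.notMem_cell_of_mem hx i) (h.1 i)] at hc
    exact ⟨rfl, hc.1, hx, hy, hc.2⟩
  · rintro ⟨rfl, rfl, hx, hy, hc⟩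
    refine ⟨hx, ⟨hy, rfl⟩, ?_⟩
    exact (two_mul_nbrCount_boxProd_eq_card_iff (h.notMem_cell_of_mem hx i) (h.1 i) _ _).2
      ⟨rfl, hc⟩

lemma GMswitch_boxProd [Fintype W] (h : IsPartitionWithCell C D) :
    GMswitch (G □ H) (fun p : ι × W => C p.1 ×ˢ {p.2}) (D ×ˢ Finset.univ) =
      GMswitch G C D □ H := by
  ext ⟨x, w⟩ ⟨y, w'⟩
  simp only [GMswitch_adj, boxProd_adj, Prod.exists, boxProd_switchable_iff h]
  by_cases hw : w = w'
  · subst hw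
    simp [← and_or_left]
  · simp [hw, Ne.symm hw, Xor]

lemma IsGMSwitching.boxProd [Fintype W] [Nonempty W] {G G' : SimpleGraph V}
    (h : IsGMSwitching G G') : IsGMSwitching (G □ H) (G' □ H) := by
  obtain ⟨t, C, D, hGM, rfl⟩ := h
  rw [← GMswitch_boxProd hGM.1]
  exact hGM.boxProd.isGMSwitching

end BoxProd

namespace SimpleGraph

variable {ι V : Type*}

def piBoxProd (G : ι → SimpleGraph V) : SimpleGraph (ι → V) where
  Adj f g := ∃ i, (G i).Adj (f i) (g i) ∧ ∀ j, j ≠ i → f j = g j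
  symm := ⟨fun _ _ ⟨i, h, h'⟩ => ⟨i, h.symm, fun j hj => (h' j hj).symm⟩⟩
  loopless := ⟨fun _ ⟨i, h, _⟩ => (G i).loopless.irrefl _ h⟩

@[simp]
lemma piBoxProd_adj (G : ι → SimpleGraph V) (f g : ι → V) :
    (piBoxProd G).Adj f g ↔ ∃ i, (G i).Adj (f i) (g i) ∧ ∀ j, j ≠ i → f j = g j :=
  Iff.rfl

lemma piBoxProd_eq_comap_funSplitAt [DecidableEq ι] (G : ι → SimpleGraph V) (i : ι) :
    piBoxProd G =
      (G i □ piBoxProd fun j : {j // j ≠ i} => G j).comap (Equiv.funSplitAt i V) := by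
  ext f g
  simp only [piBoxProd_adj, comap_adj, boxProd_adj, Equiv.funSplitAt_apply, funext_iff,
    Subtype.forall, Subtype.exists, ne_eq, Subtype.mk.injEq]
  constructor
  · rintro ⟨j, hadj, hrest⟩
    by_cases hj : j = i
    · subst hj
      exact Or.inl ⟨hadj, fun k hk => hrest k hk⟩
    · refine Or.inr ⟨⟨j, hj, hadj, fun k _ hk => hrest k hk⟩, hrest i (Ne.symm hj)⟩
  · rintro (⟨hadj, hrest⟩ | ⟨⟨j, hj, hadj, hrest⟩, hi⟩)
    · exact ⟨i, hadj, hrest⟩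
    · refine ⟨j, hadj, fun k hk => ?_⟩
      by_cases hki : k = i
      · exact hki ▸ hi
      · exact hrest k hki hk

end SimpleGraph

lemma IsGMSwitching.piBoxProd_update {ι V : Type*} [Fintype ι] [DecidableEq ι] [Fintype V]
    [Nonempty V] {G : ι → SimpleGraph V} {i : ι} {G' : SimpleGraph V}
    (h : IsGMSwitching (G i) G') :
    IsGMSwitching (piBoxProd G) (piBoxProd (Function.update G i G')) := by
  have hrest : (fun j : {j // j ≠ i} => Function.update G i G' j) =
      fun j : {j // j ≠ i} => G j :=
    funext fun j => Function.update_of_ne j.2 _ _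
  rw [piBoxProd_eq_comap_funSplitAt G i, piBoxProd_eq_comap_funSplitAt _ i, hrest,
    Function.update_self]
  exact h.boxProd.comap _

namespace SimpleGraph

variable {ι κ V W X Y : Type*}

def piBoxProdCongrLeft (σ : ι ≃ κ) (G : SimpleGraph V) :
    piBoxProd (fun _ : ι => G) ≃g piBoxProd (fun _ : κ => G) where
  toEquiv := σ.arrowCongr (Equiv.refl V)
  map_rel_iff' {f g} := by
    simp only [piBoxProd_adj, Equiv.arrowCongr_apply, Function.comp_apply, Equiv.coe_refl,
      id_eq]
    rw [σ.symm.exists_congr_left]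
    refine exists_congr fun i => and_congr (by simp) ⟨fun h j hj => ?_, fun h k hk => ?_⟩
    · simpa using h (σ j) (by simpa using hj)
    · exact h _ (by simpa [σ.symm_apply_eq] using hk)

def piBoxProdCongrRight {G : SimpleGraph V} {G' : SimpleGraph W} (φ : G ≃g G') :
    piBoxProd (fun _ : ι => G) ≃g piBoxProd (fun _ : ι => G') where
  toEquiv := (Equiv.refl ι).arrowCongr φ.toEquiv
  map_rel_iff' {f g} := by
    simp [φ.map_adj_iff]

def piBoxProdSumIso (G : ι ⊕ κ → SimpleGraph V) :
    piBoxProd G ≃g piBoxProd (G ∘ Sum.inl) □ piBoxProd (G ∘ Sum.inr) where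
  toEquiv := Equiv.sumArrowEquivProdArrow ι κ V
  map_rel_iff' {f g} := by
    simp only [piBoxProd_adj, boxProd_adj, Equiv.sumArrowEquivProdArrow_apply_fst,
      Equiv.sumArrowEquivProdArrow_apply_snd, Function.comp_apply, funext_iff, Sum.exists,
      Sum.forall, ne_eq, reduceCtorEq, not_false_eq_true, forall_const, Sum.inl.injEq,
      Sum.inr.injEq]
    constructor
    · rintro (⟨⟨i, h, h'⟩, h''⟩ | ⟨⟨i, h, h'⟩, h''⟩)
      exacts [Or.inl ⟨i, h, h', h''⟩, Or.inr ⟨i, h, h'', h'⟩]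
    · rintro (⟨i, h, h', h''⟩ | ⟨i, h, h', h''⟩)
      exacts [Or.inl ⟨⟨i, h, h'⟩, h''⟩, Or.inr ⟨⟨i, h, h''⟩, h'⟩]

def piBoxProdCurryIso (G : ι × κ → SimpleGraph V) :
    piBoxProd G ≃g piBoxProd fun i => piBoxProd fun k => G (i, k) where
  toEquiv := Equiv.curry ι κ V
  map_rel_iff' {f g} := by
    simp only [piBoxProd_adj, Equiv.curry_apply, Function.curry_apply, funext_iff,
      Prod.exists, Prod.forall, ne_eq, Prod.mk.injEq, not_and]
    constructor
    · rintro ⟨i, ⟨k, h, hk⟩, hi⟩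
      refine ⟨i, k, h, fun i' k' hne => ?_⟩
      by_cases hi' : i' = i
      · subst hi'
        exact hk k' (hne rfl)
      · exact hi i' hi' k'
    · rintro ⟨i, k, h, hne⟩
      exact ⟨i, ⟨k, h, fun k' hk' => hne i k' fun _ => hk'⟩,
        fun i' hi' k' => hne i' k' fun h => absurd h hi'⟩

def piBoxProdFinTwoIso (G : Fin 2 → SimpleGraph V) : piBoxProd G ≃g G 0 □ G 1 where
  toEquiv := piFinTwoEquiv fun _ => V
  map_rel_iff' {f g} := by
    simp [boxProd_adj, Fin.exists_fin_two, Fin.forall_fin_two]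

def Iso.boxProdCongr {G : SimpleGraph V} {G' : SimpleGraph W} {H : SimpleGraph X}
    {H' : SimpleGraph Y} (φ : G ≃g G') (ψ : H ≃g H') : (G □ H) ≃g (G' □ H') where
  toEquiv := φ.toEquiv.prodCongr ψ.toEquiv
  map_rel_iff' {p q} := by
    simp [boxProd_adj, φ.map_adj_iff, ψ.map_adj_iff]

end SimpleGraph

lemma mem_diagC {p : Fin 4 × Fin 4} : p ∈ diagC ↔ p.1 = p.2 := by
  simp [diagC]

lemma H24_adj {p q : Fin 4 × Fin 4} :
    H24.Adj p q ↔ (p.1 ≠ q.1 ∧ p.2 = q.2) ∨ (p.2 ≠ q.2 ∧ p.1 = q.1) := by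
  simp [H24, SimpleGraph.boxProd_adj]

lemma nbrCount_H24_diagC (p : Fin 4 × Fin 4) :
    nbrCount H24 p diagC = if p.1 = p.2 then 0 else 2 := by
  rw [nbrCount, Finset.filter_congr fun q _ => H24_adj]
  revert p
  decide

lemma isGMPartition_H24_diagC : IsGMPartition H24 (fun _ : Fin 1 => diagC) diagCᶜ := by
  refine ⟨⟨fun _ => ⟨(0, 0), mem_diagC.2 rfl⟩, ⟨(0, 1), by decide⟩,
    fun i j hij => absurd (Subsingleton.elim i j) hij, fun _ => disjoint_compl_right,
    fun x => ?_⟩, fun _ _ x hx y hy => ?_, fun x hx _ => ?_⟩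
  · by_cases hx : x ∈ diagC
    exacts [Or.inr ⟨0, hx⟩, Or.inl (Finset.mem_compl.2 hx)]
  · rw [nbrCount_H24_diagC, nbrCount_H24_diagC, if_pos (mem_diagC.1 hx),
      if_pos (mem_diagC.1 hy)]
  · rw [Finset.mem_compl, mem_diagC] at hx
    rw [nbrCount_H24_diagC, if_neg hx, show diagC.card = 4 by decide]
    simp

lemma isGMSwitching_H24_Shrikhande : IsGMSwitching H24 Shrikhande :=
  ⟨1, _, _, isGMPartition_H24_diagC, rfl⟩

def partialDoob (m n k : ℕ) : SimpleGraph ((Fin m → Fin 4 × Fin 4) × (Fin n → Fin 4)) :=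
  piBoxProd (fun i : Fin m => if (i : ℕ) < k then Shrikhande else H24) □
    piBoxProd fun _ : Fin n => (⊤ : SimpleGraph (Fin 4))

lemma partialDoob_zero (m n : ℕ) :
    partialDoob m n 0 =
      piBoxProd (fun _ : Fin m => H24) □
        piBoxProd fun _ : Fin n => (⊤ : SimpleGraph (Fin 4)) := by
  simp [partialDoob]

lemma partialDoob_self (m n : ℕ) : partialDoob m n m = DoobGraph m n := by
  ext p q
  simp [partialDoob, boxProd_adj, DoobGraph, ← and_assoc, exists_and_right]

lemma isGMSwitching_partialDoob_succ {m : ℕ} (n : ℕ) (k : Fin m) :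
    IsGMSwitching (partialDoob m n k) (partialDoob m n (k + 1)) := by
  have hfamily : (fun i : Fin m => if (i : ℕ) < k + 1 then Shrikhande else H24) =
      Function.update (fun i : Fin m => if (i : ℕ) < k then Shrikhande else H24) k
        Shrikhande := by
    funext i
    simp only [Function.update_apply, Fin.ext_iff]
    split_ifs <;> first | rfl | omega
  rw [partialDoob, partialDoob, hfamily]
  exact (IsGMSwitching.piBoxProd_update (by simpa using isGMSwitching_H24_Shrikhande)).boxProd

-- The chain starts from `piBoxProd fun _ => ⊤`, to which `HamGraph (2 * m + n)` is defeq.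
def hammingIso (m n : ℕ) :
    HamGraph (2 * m + n) ≃g
      piBoxProd (fun _ : Fin m => H24) □ piBoxProd fun _ : Fin n => (⊤ : SimpleGraph (Fin 4)) :=
  let σ : (Fin m × Fin 2) ⊕ Fin n ≃ Fin (2 * m + n) :=
    (Equiv.sumCongr (finProdFinEquiv.trans (finCongr (Nat.mul_comm m 2))) (Equiv.refl _)).trans
      finSumFinEquiv
  (piBoxProdCongrLeft σ.symm ⊤).trans <|
    (piBoxProdSumIso fun _ => ⊤).trans <|
      Iso.boxProdCongr ((piBoxProdCurryIso fun _ => ⊤).trans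
        (piBoxProdCongrRight (piBoxProdFinTwoIso fun _ => ⊤))) Iso.refl

theorem doob_from_hamming_by_switching_general (m n : ℕ) :
    ∃ Γ : Fin (m + 1) → SimpleGraph (Fin (2 * m + n) → Fin 4),
      Γ 0 = HamGraph (2 * m + n)
      ∧ Nonempty (Γ (Fin.last m) ≃g DoobGraph m n)
      ∧ ∀ k : Fin m, ∃ (t : ℕ) (C : Fin t → Finset (Fin (2 * m + n) → Fin 4))
          (D : Finset (Fin (2 * m + n) → Fin 4)),
            IsGMPartition (Γ k.castSucc) C D
            ∧ Γ k.succ = GMswitch (Γ k.castSucc) C D := by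
  refine ⟨fun k => (partialDoob m n k).comap (hammingIso m n), ?_, ?_,
    fun k => (isGMSwitching_partialDoob_succ n k).comap (hammingIso m n).toEquiv⟩
  · simp only [Fin.val_zero, partialDoob_zero]
    exact (hammingIso m n).toEmbedding.comap_eq
  · simp only [Fin.val_last, partialDoob_self]
    exact ⟨Iso.comap (hammingIso m n).toEquiv _⟩

/-- the Doob graph `D(m,n)` is obtained from the Hamming graph
`H(2m+n,4)` by applying Godsil–McKay switching `m` times. -/
theorem doob_from_hamming_by_switching (m n : ℕ) (hm : 1 ≤ m) :
    ∃ Γ : Fin (m + 1) → SimpleGraph (Fin (2 * m + n) → Fin 4),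
      Γ 0 = HamGraph (2 * m + n)
      ∧ Nonempty (Γ (Fin.last m) ≃g DoobGraph m n)
      ∧ ∀ k : Fin m, ∃ (t : ℕ) (C : Fin t → Finset (Fin (2 * m + n) → Fin 4))
          (D : Finset (Fin (2 * m + n) → Fin 4)),
            IsGMPartition (Γ k.castSucc) C D
            ∧ Γ k.succ = GMswitch (Γ k.castSucc) C D :=
  doob_from_hamming_by_switching_general m n
end
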